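/- Let k,l ≥ 2. A (k,l)-admissible word is a sequence (c_i)_{i≥1} of non-negative integers with finitely many nonzero terms, with c_i ≤ o_i + 1 where o_{2i-1} = l − 2 and o_{2i} = k − 2, and containing no forbidden pattern (i.e., no pair i < j with c_h = o_h + [h ∈ {i,j}] for all i ≤ h ≤ j). Then the map Γ sending (c_i) to ∑_{i≥1} c_i·a^{(k,l)}_i is a bijection from the set of (k,l)-admissible words to the non-negative integers, and its inverse is given by the greedy algorithm: for m with a^{(k,l)}_{n-1} ≤ m < a^{(k,l)}_n, set c_i = 0 for i ≥ n and recursively c_i = ⌊(m − ∑_{j=i+1}^{n-1} c_j·a^{(k,l)}_j)/a^{(k,l)}_i⌋. -/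

import Mathlib

/-- The alternating coefficient sequence: `l - 2` at odd indices, `k - 2` at even ones. -/
def klCoeff (k l : ℕ) (i : ℕ) : ℕ := if i % 2 = 1 then l - 2 else k - 2

/-- A forbidden pattern in a word. -/
def Forbidden (k l : ℕ) (c : ℕ → ℕ) : Prop :=
  ∃ i j : ℕ, 1 ≤ i ∧ i < j ∧
    ∀ h : ℕ, i ≤ h → h ≤ j → c h = klCoeff k l h + (if h = i ∨ h = j then 1 else 0)

/-- The set of (k,l)-admissible words (indexed from 1; position 0 is unused). -/
def Admissible (k l : ℕ) : Set (ℕ → ℕ) :=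
  {c | c 0 = 0 ∧ (∃ N : ℕ, ∀ i : ℕ, N ≤ i → c i = 0) ∧
       (∀ i : ℕ, 1 ≤ i → c i ≤ klCoeff k l i + 1) ∧ ¬Forbidden k l c}

/-- The evaluation map of a word against the (k,l)-sequence. -/
noncomputable def Gamma (a : ℕ → ℤ) (c : ℕ → ℕ) : ℤ := ∑ᶠ i : ℕ, (c i : ℤ) * a i

/-!
Summing the recurrence gives `a (n + 1) - 1 = a n + ∑_{1 ≤ i ≤ n} o i * a i` with
`o = klCoeff k l`. By induction on `n`, the digits of an admissible word below `n` are worth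
less than `a n`: a maximal digit `c n = o n + 1` is only allowed when the lower digits do not
exceed `o`, since otherwise a forbidden pattern would close at `n`. So each digit `c n` is the
quotient of the value of the digits up to `n` by `a n`, which is the greedy algorithm and gives
injectivity. Conversely the greedy digits of any `m ≥ 0` form an admissible word: a forbidden
pattern ending at the top digit would push the value past `a (n + 1)`.
-/

open Finset

structure IsKLSequence (k l : ℕ) (a : ℕ → ℤ) : Prop where
  zero : a 0 = 0
  one : a 1 = 1
  succ_succ (i : ℕ) : a (i + 2) = ((klCoeff k l (i + 1) : ℤ) + 2) * a (i + 1) - a i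

theorem isKLSequence_of_rec {k l : ℕ} (hk : 2 ≤ k) (hl : 2 ≤ l) {a : ℕ → ℤ}
    (ha0 : a 0 = 0) (ha1 : a 1 = 1)
    (haeven : ∀ n : ℕ, a (2 * n + 2) = (l : ℤ) * a (2 * n + 1) - a (2 * n))
    (haodd : ∀ n : ℕ, a (2 * n + 3) = (k : ℤ) * a (2 * n + 2) - a (2 * n + 1)) :
    IsKLSequence k l a where
  zero := ha0
  one := ha1
  succ_succ i := by
    obtain ⟨m, rfl | rfl⟩ := Nat.even_or_odd' i
    · have hm : klCoeff k l (2 * m + 1) = l - 2 := by simp [klCoeff]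
      rw [hm, Nat.cast_sub hl, haeven]
      ring
    · have hm : klCoeff k l (2 * m + 1 + 1) = k - 2 := by simp [klCoeff]; omega
      rw [hm, Nat.cast_sub hk, show 2 * m + 1 + 2 = 2 * m + 3 by ring, haodd]
      ring

def partialGamma (a : ℕ → ℤ) (c : ℕ → ℕ) (n : ℕ) : ℤ := ∑ i ∈ Ico 1 n, (c i : ℤ) * a i

/-- A forbidden pattern has been opened at some `t < n` and is still unclosed before `n`. -/
def OpenRun (k l : ℕ) (c : ℕ → ℕ) (n : ℕ) : Prop :=
  ∃ t, 1 ≤ t ∧ t < n ∧ c t = klCoeff k l t + 1 ∧ ∀ h, t < h → h < n → c h = klCoeff k l h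

variable {k l : ℕ} {a : ℕ → ℤ} {c d : ℕ → ℕ} {n : ℕ}

section partialGamma

theorem partialGamma_succ (c : ℕ → ℕ) (hn : 1 ≤ n) :
    partialGamma a c (n + 1) = partialGamma a c n + c n * a n :=
  sum_Ico_succ_top hn _

theorem partialGamma_add_sum_Ico (c : ℕ → ℕ) {m : ℕ} (hm : 1 ≤ m) (hmn : m ≤ n) :
    partialGamma a c m + ∑ i ∈ Ico m n, (c i : ℤ) * a i = partialGamma a c n :=
  sum_Ico_consecutive _ hm hmn

theorem partialGamma_congr (h : ∀ i < n, c i = d i) :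
    partialGamma a c n = partialGamma a d n :=
  sum_congr rfl fun i hi => by rw [h i (mem_Ico.1 hi).2]

theorem partialGamma_nonneg (ha : ∀ i, 0 ≤ a i) (c : ℕ → ℕ) (n : ℕ) :
    0 ≤ partialGamma a c n :=
  sum_nonneg fun i _ => mul_nonneg (Nat.cast_nonneg _) (ha i)

theorem Gamma_eq_partialGamma (hc0 : c 0 = 0) (hcn : ∀ i, n ≤ i → c i = 0) :
    Gamma a c = partialGamma a c n := by
  refine finsum_eq_sum_of_support_subset _ fun i hi => ?_
  have hi : c i ≠ 0 := by contrapose! hi; simp [hi]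
  have : i ≠ 0 := by rintro rfl; exact hi hc0
  have : i < n := by contrapose! hi; exact hcn i hi
  simp only [coe_Ico, Set.mem_Ico]
  omega

theorem Gamma_nonneg (ha : ∀ i, 0 ≤ a i) (c : ℕ → ℕ) : 0 ≤ Gamma a c :=
  finsum_nonneg fun i => mul_nonneg (Nat.cast_nonneg _) (ha i)

end partialGamma

section OpenRun

theorem forbidden_iff :
    Forbidden k l c ↔ ∃ j, OpenRun k l c j ∧ c j = klCoeff k l j + 1 := by
  constructor
  · rintro ⟨i, j, hi, hij, hc⟩
    refine ⟨j, ⟨i, hi, hij, by simpa using hc i le_rfl hij.le, fun h hih hhj => ?_⟩, ?_⟩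
    · simpa [hih.ne', hhj.ne] using hc h hih.le hhj.le
    · simpa using hc j hij.le le_rfl
  · rintro ⟨j, ⟨t, ht, htj, hct, hc⟩, hcj⟩
    refine ⟨t, j, ht, htj, fun h hth hhj => ?_⟩
    rcases hth.eq_or_lt with rfl | hth
    · simpa using hct
    rcases hhj.eq_or_lt with rfl | hhj
    · simpa using hcj
    simpa [hth.ne', hhj.ne] using hc h hth hhj

theorem openRun_succ_of_eq_add_one (hn : 1 ≤ n) (hcn : c n = klCoeff k l n + 1) :
    OpenRun k l c (n + 1) :=
  ⟨n, hn, n.lt_succ_self, hcn, fun _ h₁ h₂ => absurd h₂ (by omega)⟩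

theorem OpenRun.succ (h : OpenRun k l c n) (hcn : c n = klCoeff k l n) :
    OpenRun k l c (n + 1) := by
  obtain ⟨t, ht, htn, hct, hc⟩ := h
  refine ⟨t, ht, htn.trans n.lt_succ_self, hct, fun h hth hhn => ?_⟩
  rcases Nat.lt_succ_iff_lt_or_eq.1 hhn with hhn | rfl
  exacts [hc h hth hhn, hcn]

theorem openRun_congr (h : ∀ i < n, c i = d i) : OpenRun k l c n ↔ OpenRun k l d n := by
  refine exists_congr fun t => and_congr_right fun _ => and_congr_right fun htn => ?_
  rw [h t htn]
  refine and_congr_right fun _ => forall_congr' fun i => ?_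
  exact imp_congr_right fun _ => imp_congr_right fun hin => by rw [h i hin]

theorem not_forbidden_update (hd : ¬Forbidden k l d) (hd0 : ∀ i, n ≤ i → d i = 0) {q : ℕ}
    (hq : q = klCoeff k l n + 1 → ¬OpenRun k l d n) :
    ¬Forbidden k l (Function.update d n q) := by
  have hcd : ∀ i, i ≠ n → Function.update d n q i = d i :=
    fun i hi => Function.update_of_ne hi _ _
  rw [forbidden_iff]
  rintro ⟨j, hj, hcj⟩
  rcases lt_trichotomy j n with hjn | rfl | hjn
  · refine hd (forbidden_iff.2 ⟨j, ?_, hcd j hjn.ne ▸ hcj⟩)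
    exact (openRun_congr fun i hi => hcd i (by omega)).1 hj
  · exact hq (by simpa using hcj) ((openRun_congr fun i hi => hcd i hi.ne).1 hj)
  · simp [hcd j hjn.ne', hd0 j hjn.le] at hcj

theorem zero_mem_admissible : (0 : ℕ → ℕ) ∈ Admissible k l := by
  refine ⟨rfl, ⟨0, fun _ _ => rfl⟩, fun _ _ => Nat.zero_le _, fun h => ?_⟩
  obtain ⟨j, -, hj⟩ := forbidden_iff.1 h
  simp at hj

end OpenRun

namespace IsKLSequence

theorem nonneg_and_lt_succ (ha : IsKLSequence k l a) (n : ℕ) :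
    0 ≤ a n ∧ a n < a (n + 1) := by
  induction n with
  | zero => simp [ha.zero, ha.one]
  | succ n ih =>
    have := mul_nonneg (Nat.cast_nonneg (klCoeff k l (n + 1))) (ih.1.trans ih.2.le)
    rw [ha.succ_succ]
    constructor <;> linarith

theorem nonneg (ha : IsKLSequence k l a) (n : ℕ) : 0 ≤ a n := (ha.nonneg_and_lt_succ n).1

theorem strictMono (ha : IsKLSequence k l a) : StrictMono a :=
  strictMono_nat_of_lt_succ fun n => (ha.nonneg_and_lt_succ n).2

theorem pos (ha : IsKLSequence k l a) (hn : 1 ≤ n) : 0 < a n := ha.zero ▸ ha.strictMono hn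

theorem natCast_le (ha : IsKLSequence k l a) (n : ℕ) : (n : ℤ) ≤ a n := by
  induction n with
  | zero => simp [ha.zero]
  | succ n ih => push_cast; linarith [ha.strictMono n.lt_succ_self]

theorem succ_eq_partialGamma (ha : IsKLSequence k l a) (n : ℕ) :
    a (n + 1) = a n + partialGamma a (klCoeff k l) (n + 1) + 1 := by
  induction n with
  | zero => simp [partialGamma, ha.zero, ha.one]
  | succ n ih =>
    rw [ha.succ_succ, partialGamma_succ _ n.succ_pos]
    linarith

theorem partialGamma_klCoeff_lt (ha : IsKLSequence k l a) (hn : 1 ≤ n) :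
    partialGamma a (klCoeff k l) n < a n := by
  obtain ⟨n, rfl⟩ := Nat.exists_eq_add_of_le' hn
  linarith [ha.succ_eq_partialGamma n, ha.nonneg n]

theorem partialGamma_klCoeff_lt_of_openRun (ha : IsKLSequence k l a) (h : OpenRun k l c n) :
    partialGamma a (klCoeff k l) n < partialGamma a c n := by
  obtain ⟨t, ht, htn, hct, hc⟩ := h
  have hsplit (d : ℕ → ℕ) : partialGamma a d n =
      partialGamma a d t + d t * a t + ∑ i ∈ Ico (t + 1) n, (d i : ℤ) * a i := by
    rw [← partialGamma_succ d ht, partialGamma_add_sum_Ico d (by omega) htn]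
  have htail : ∑ i ∈ Ico (t + 1) n, (c i : ℤ) * a i =
      ∑ i ∈ Ico (t + 1) n, (klCoeff k l i : ℤ) * a i :=
    sum_congr rfl fun i hi => by rw [hc i (mem_Ico.1 hi).1 (mem_Ico.1 hi).2]
  rw [hsplit c, hsplit (klCoeff k l), htail, hct]
  push_cast
  linarith [ha.partialGamma_klCoeff_lt ht, partialGamma_nonneg ha.nonneg c t]

/-- The bound `partialGamma a c n < a n`, strengthened so that it survives induction on `n`. -/
theorem partialGamma_lt_and_le_or_openRun (ha : IsKLSequence k l a) (hc : c ∈ Admissible k l)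
    (hn : 1 ≤ n) :
    partialGamma a c n < a n ∧
      (partialGamma a c n ≤ partialGamma a (klCoeff k l) n ∨ OpenRun k l c n) := by
  induction n, hn using Nat.le_induction with
  | base => simp [partialGamma, ha.one]
  | succ n hn ih =>
    rw [partialGamma_succ c hn, partialGamma_succ _ hn, ha.succ_eq_partialGamma n,
      partialGamma_succ _ hn]
    have hS := partialGamma_nonneg ha.nonneg (klCoeff k l) n
    have han := ha.nonneg n
    rcases lt_trichotomy (c n) (klCoeff k l n) with hlt | heq | hgt
    · have : ((c n : ℤ) + 1) * a n ≤ klCoeff k l n * a n :=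
        mul_le_mul_of_nonneg_right (by exact_mod_cast hlt) han
      exact ⟨by linarith, Or.inl (by linarith)⟩
    · rw [heq]
      exact ⟨by linarith, ih.2.imp (fun h => by linarith) (·.succ heq)⟩
    · have hmax : c n = klCoeff k l n + 1 := le_antisymm (hc.2.2.1 n hn) hgt
      have hle := ih.2.resolve_right fun h => hc.2.2.2 (forbidden_iff.2 ⟨n, h, hmax⟩)
      refine ⟨?_, Or.inr (openRun_succ_of_eq_add_one hn hmax)⟩
      rw [hmax]
      push_cast
      linarith

theorem partialGamma_lt (ha : IsKLSequence k l a) (hc : c ∈ Admissible k l) (hn : 1 ≤ n) :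
    partialGamma a c n < a n :=
  (ha.partialGamma_lt_and_le_or_openRun hc hn).1

theorem partialGamma_succ_ediv (ha : IsKLSequence k l a) (hc : c ∈ Admissible k l)
    (hn : 1 ≤ n) :
    partialGamma a c (n + 1) / a n = c n := by
  rw [partialGamma_succ c hn, Int.add_mul_ediv_right _ _ (ha.pos hn).ne',
    Int.ediv_eq_zero_of_lt (partialGamma_nonneg ha.nonneg c n) (ha.partialGamma_lt hc hn),
    zero_add]

theorem eq_zero_of_Gamma_lt (ha : IsKLSequence k l a) (hc : c ∈ Admissible k l)
    (h : Gamma a c < a n) {i : ℕ} (hi : n ≤ i) : c i = 0 := by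
  obtain ⟨N, hN⟩ := hc.2.1
  have hfin : (Function.support fun j => (c j : ℤ) * a j).Finite :=
    (Set.finite_Iio N).subset fun j hj => by
      by_contra hjN
      exact hj (by simp [hN j (not_lt.1 hjN)])
  have hci : (c i : ℤ) * a i ≤ Gamma a c :=
    single_le_finsum i hfin fun j => mul_nonneg (Nat.cast_nonneg _) (ha.nonneg j)
  by_contra hne
  have : a i ≤ c i * a i :=
    le_mul_of_one_le_left (ha.nonneg i) (by exact_mod_cast Nat.one_le_iff_ne_zero.2 hne)
  linarith [ha.strictMono.monotone hi]

theorem eqOn_of_partialGamma_eq (ha : IsKLSequence k l a) (hc : c ∈ Admissible k l)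
    (hd : d ∈ Admissible k l) :
    ∀ {n}, partialGamma a c n = partialGamma a d n → ∀ i, 1 ≤ i → i < n → c i = d i := by
  intro n
  induction n with
  | zero => intro _ i _ hi; omega
  | succ n ih =>
    intro h i hi hin
    have hn : 1 ≤ n := by omega
    have hcn : c n = d n := by
      exact_mod_cast (ha.partialGamma_succ_ediv hc hn).symm.trans
        (h ▸ ha.partialGamma_succ_ediv hd hn)
    rcases Nat.lt_succ_iff_lt_or_eq.1 hin with hin | rfl
    · rw [partialGamma_succ c hn, partialGamma_succ d hn, hcn] at h
      exact ih (by linarith) i hi hin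
    · exact hcn

theorem injOn_Gamma (ha : IsKLSequence k l a) : Set.InjOn (Gamma a) (Admissible k l) := by
  intro c hc d hd h
  set n := (Gamma a c).toNat + 1
  have hcn : Gamma a c < a n := by have := ha.natCast_le n; omega
  have hc0 : ∀ i, n ≤ i → c i = 0 := fun i => ha.eq_zero_of_Gamma_lt hc hcn
  have hd0 : ∀ i, n ≤ i → d i = 0 := fun i => ha.eq_zero_of_Gamma_lt hd (h ▸ hcn)
  have hcd := ha.eqOn_of_partialGamma_eq hc hd
    (by rw [← Gamma_eq_partialGamma hc.1 hc0, ← Gamma_eq_partialGamma hd.1 hd0, h])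
  funext i
  rcases Nat.eq_zero_or_pos i with rfl | hi
  · rw [hc.1, hd.1]
  rcases lt_or_ge i n with hin | hin
  · exact hcd i hi hin
  · rw [hc0 i hin, hd0 i hin]

/-- Greedy construction: the top digit is `m / a n`, the rest represents `m % a n`. -/
theorem exists_admissible_partialGamma_eq (ha : IsKLSequence k l a) (hn : 1 ≤ n) {m : ℤ}
    (hm : 0 ≤ m) (hmn : m < a n) :
    ∃ c ∈ Admissible k l, (∀ i, n ≤ i → c i = 0) ∧ partialGamma a c n = m := by
  induction n, hn using Nat.le_induction generalizing m with
  | base =>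
    refine ⟨0, zero_mem_admissible, fun _ _ => rfl, ?_⟩
    rw [ha.one] at hmn
    simp [partialGamma]
    omega
  | succ n hn ih =>
    have han := ha.pos hn
    obtain ⟨d, hd, hd0, hdm⟩ := ih (Int.emod_nonneg m han.ne') (Int.emod_lt_of_pos m han)
    set q := m / a n
    have hq : 0 ≤ q := Int.ediv_nonneg hm han.le
    have hmq : a n * q + m % a n = m := Int.mul_ediv_add_emod m (a n)
    have hS := ha.partialGamma_klCoeff_lt hn
    rw [ha.succ_eq_partialGamma n, partialGamma_succ _ hn] at hmn
    set c := Function.update d n q.toNat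
    have hcn : (c n : ℤ) = q := by simp [c, hq]
    have hcd : ∀ i, i ≠ n → c i = d i := fun i hi => Function.update_of_ne hi _ _
    refine ⟨c, ⟨?_, ⟨n + 1, ?_⟩, fun i hi => ?_, not_forbidden_update hd.2.2.2 hd0 ?_⟩,
      fun i hi => ?_, ?_⟩
    · rw [hcd 0 (by omega), hd.1]
    · exact fun i hi => (hcd i (by omega)).trans (hd0 i (by omega))
    · rcases eq_or_ne i n with rfl | hin
      · have : q < klCoeff k l i + 2 := by
          by_contra! h
          nlinarith [partialGamma_nonneg ha.nonneg d i]
        omega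
      · exact hcd i hin ▸ hd.2.2.1 i hi
    · intro htop hrun
      have hr := ha.partialGamma_klCoeff_lt_of_openRun hrun
      have hqo : q = klCoeff k l n + 1 := by omega
      rw [hdm] at hr
      rw [hqo] at hmq
      linarith
    · rw [hcd i (by omega), hd0 i (by omega)]
    · rw [partialGamma_succ c hn, partialGamma_congr fun i hi => hcd i hi.ne, hdm, hcn]
      linarith

theorem surjOn_Gamma (ha : IsKLSequence k l a) :
    Set.SurjOn (Gamma a) (Admissible k l) {m | 0 ≤ m} := by
  intro m (hm : 0 ≤ m)
  have hmn : m < a (m.toNat + 1) := by have := ha.natCast_le (m.toNat + 1); omega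
  obtain ⟨c, hc, hc0, hcm⟩ := ha.exists_admissible_partialGamma_eq (Nat.le_add_left 1 _) hm hmn
  exact ⟨c, hc, (Gamma_eq_partialGamma hc.1 hc0).trans hcm⟩

theorem bijOn_Gamma (ha : IsKLSequence k l a) :
    Set.BijOn (Gamma a) (Admissible k l) {m | 0 ≤ m} :=
  ⟨fun c _ => Gamma_nonneg ha.nonneg c, ha.injOn_Gamma, ha.surjOn_Gamma⟩

end IsKLSequence

/-- Γ is a bijection from (k,l)-admissible words to ℤ≥0, with greedy inverse. -/
theorem gamma_bijection_greedy
    (k l : ℕ) (hk : 2 ≤ k) (hl : 2 ≤ l)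
    (a : ℕ → ℤ)
    (ha0 : a 0 = 0) (ha1 : a 1 = 1)
    (haeven : ∀ n : ℕ, a (2 * n + 2) = (l : ℤ) * a (2 * n + 1) - a (2 * n))
    (haodd : ∀ n : ℕ, a (2 * n + 3) = (k : ℤ) * a (2 * n + 2) - a (2 * n + 1)) :
    Set.BijOn (Gamma a) (Admissible k l) {m : ℤ | 0 ≤ m} ∧
    ∀ m : ℤ, ∀ n : ℕ, 1 ≤ n → a (n - 1) ≤ m → m < a n →
      ∀ c ∈ Admissible k l, Gamma a c = m →
        (∀ i : ℕ, n ≤ i → c i = 0) ∧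
        ∀ i : ℕ, 1 ≤ i → i < n →
          (c i : ℤ) = (m - ∑ j ∈ Finset.Ico (i + 1) n, (c j : ℤ) * a j) / a i := by
  have ha := isKLSequence_of_rec hk hl ha0 ha1 haeven haodd
  refine ⟨ha.bijOn_Gamma, fun m n _ _ hmn c hc hcm => ?_⟩
  subst hcm
  have hc0 : ∀ i, n ≤ i → c i = 0 := fun i => ha.eq_zero_of_Gamma_lt hc hmn
  refine ⟨hc0, fun i hi hin => ?_⟩
  rw [Gamma_eq_partialGamma hc.1 hc0, ← partialGamma_add_sum_Ico c (by omega : 1 ≤ i + 1) hin,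
    add_sub_cancel_right, ha.partialGamma_succ_ediv hc hi]
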